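/- arXiv:2305.15857 — 2 statements merged into one kernel-verified Lean document; each statement's English description precedes it below -/
import Mathlib

section
/- Let Ω ⊆ ℝ³ be open, let f, g : Ω → ℝ be twice continuously differentiable with f > 0 and g > 0 on Ω, and let w : Ω → ℍ be twice continuously differentiable. If w satisfies Dw = (∇f/f)·star(w) + (∇g/g)·w on Ω, then the scalar function Sc(w)/g satisfies the Schrödinger equation Δ( Sc(w)/g ) − (Δf/f)·( Sc(w)/g ) = 0 on Ω. -/
open MeasureTheory

noncomputable section

/-- The quaternion unit `i`. -/
def qi : Quaternion ℝ := ⟨0, 1, 0, 0⟩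
/-- The quaternion unit `j`. -/
def qj : Quaternion ℝ := ⟨0, 0, 1, 0⟩
/-- The quaternion unit `k`. -/
def qk : Quaternion ℝ := ⟨0, 0, 0, 1⟩

/-- Partial derivative of a quaternion-valued function on `ℝ³`. -/
def pd (i : Fin 3) (w : (Fin 3 → ℝ) → Quaternion ℝ) (x : Fin 3 → ℝ) : Quaternion ℝ :=
  fderiv ℝ w x (Pi.single i 1)

/-- Partial derivative of a real-valued function on `ℝ³`. -/
def pdR (i : Fin 3) (u : (Fin 3 → ℝ) → ℝ) (x : Fin 3 → ℝ) : ℝ :=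
  fderiv ℝ u x (Pi.single i 1)

/-- Moisil–Teodorescu operator `Dw = i ∂₁ w + j ∂₂ w + k ∂₃ w`. -/
def Dq (w : (Fin 3 → ℝ) → Quaternion ℝ) (x : Fin 3 → ℝ) : Quaternion ℝ :=
  qi * pd 0 w x + qj * pd 1 w x + qk * pd 2 w x

/-- Gradient of a real-valued function, viewed as a pure quaternion. -/
def gradq (u : (Fin 3 → ℝ) → ℝ) (x : Fin 3 → ℝ) : Quaternion ℝ :=
  ⟨0, pdR 0 u x, pdR 1 u x, pdR 2 u x⟩

/-- Laplacian of a real-valued function on `ℝ³`. -/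
def lapl (u : (Fin 3 → ℝ) → ℝ) (x : Fin 3 → ℝ) : ℝ :=
  pdR 0 (pdR 0 u) x + pdR 1 (pdR 1 u) x + pdR 2 (pdR 2 u) x

/-- Vector (non-scalar) part of a quaternion. -/
def Vecq (q : Quaternion ℝ) : Quaternion ℝ := q - (q.re : Quaternion ℝ)

/-- Divergence of the vector part of a quaternion-valued function. -/
def divVec (α : (Fin 3 → ℝ) → Quaternion ℝ) (x : Fin 3 → ℝ) : ℝ :=
  pdR 0 (fun y => (α y).imI) x + pdR 1 (fun y => (α y).imJ) x + pdR 2 (fun y => (α y).imK) x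

/-!
Put `u = Sc w / g` and `V = (f / g) · Vec w`. The vector part of the Vekua equation says exactly
that `u ∇f - f ∇u = curl V`. Taking divergences, the left side becomes `u Δf - f Δu`, while the
divergence of a curl vanishes by symmetry of second derivatives; hence `Δu = (Δf / f) u`.
-/

section PartialDerivatives

variable {u v : (Fin 3 → ℝ) → ℝ} {x : Fin 3 → ℝ} {i j : Fin 3}

theorem pdR_congr_of_eqOn {Ω : Set (Fin 3 → ℝ)} (hΩ : IsOpen Ω) (hx : x ∈ Ω)
    (huv : Set.EqOn u v Ω) : pdR i u x = pdR i v x := by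
  rw [pdR, pdR, Filter.EventuallyEq.fderiv_eq (Filter.eventuallyEq_of_mem (hΩ.mem_nhds hx) huv)]

theorem pdR_sub (hu : DifferentiableAt ℝ u x) (hv : DifferentiableAt ℝ v x) :
    pdR i (fun y => u y - v y) x = pdR i u x - pdR i v x := by
  simp [pdR, fderiv_fun_sub hu hv]

theorem pdR_mul (hu : DifferentiableAt ℝ u x) (hv : DifferentiableAt ℝ v x) :
    pdR i (fun y => u y * v y) x = pdR i u x * v x + u x * pdR i v x := by
  simp only [pdR, fderiv_fun_mul hu hv, add_apply, smul_apply, smul_eq_mul]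
  ring

theorem pdR_inv (hv : DifferentiableAt ℝ v x) (hv0 : v x ≠ 0) :
    pdR i (fun y => (v y)⁻¹) x = -pdR i v x / v x ^ 2 := by
  rw [pdR, show (fun y => (v y)⁻¹) = (fun t : ℝ => t⁻¹) ∘ v from rfl,
    fderiv_comp x (differentiableAt_inv hv0) hv]
  simp only [fderiv_inv, ContinuousLinearMap.comp_apply,
    ContinuousLinearMap.toSpanSingleton_apply, smul_eq_mul, pdR]
  ring

theorem pdR_div (hu : DifferentiableAt ℝ u x) (hv : DifferentiableAt ℝ v x) (hv0 : v x ≠ 0) :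
    pdR i (fun y => u y / v y) x = (pdR i u x * v x - u x * pdR i v x) / v x ^ 2 := by
  simp only [div_eq_mul_inv (u _)]
  rw [pdR_mul (v := fun y => (v y)⁻¹) hu (hv.inv hv0), pdR_inv hv hv0]
  field_simp
  ring

theorem ContDiffAt.differentiableAt_pdR (hu : ContDiffAt ℝ 2 u x) :
    DifferentiableAt ℝ (pdR i u) x :=
  ((hu.fderiv_right (m := 1) (by norm_num)).differentiableAt (by norm_num)).clm_apply
    (differentiableAt_const _)

theorem ContDiffAt.pdR_comm (hu : ContDiffAt ℝ 2 u x) :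
    pdR i (pdR j u) x = pdR j (pdR i u) x := by
  have hd : DifferentiableAt ℝ (fderiv ℝ u) x :=
    (hu.fderiv_right (m := 1) (by norm_num)).differentiableAt (by norm_num)
  have as_second_fderiv (k l : Fin 3) :
      pdR k (pdR l u) x = fderiv ℝ (fderiv ℝ u) x (Pi.single k 1) (Pi.single l 1) := by
    unfold pdR
    rw [fderiv_clm_apply hd (differentiableAt_const _)]
    simp
  rw [as_second_fderiv, as_second_fderiv, (hu.isSymmSndFDerivAt (by simp)).eq]

theorem pdR_clm_comp {E : Type*} [NormedAddCommGroup E] [NormedSpace ℝ E] (L : E →L[ℝ] ℝ)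
    {w : (Fin 3 → ℝ) → E} (hw : DifferentiableAt ℝ w x) :
    pdR i (fun y => L (w y)) x = L (fderiv ℝ w x (Pi.single i 1)) := by
  rw [pdR, show (fun y => L (w y)) = L ∘ w from rfl, fderiv_comp x L.differentiableAt hw]
  simp

end PartialDerivatives

/-- Indices wrap around in `Fin 3`: `curl V 0 x = pdR 1 (V 2) x - pdR 2 (V 1) x`. -/
def curl (V : Fin 3 → (Fin 3 → ℝ) → ℝ) (i : Fin 3) (x : Fin 3 → ℝ) : ℝ :=
  pdR (i + 1) (V (i + 2)) x - pdR (i + 2) (V (i + 1)) x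

section VectorCalculus

variable {u v : (Fin 3 → ℝ) → ℝ} {x : Fin 3 → ℝ}

theorem sum_pdR_curl_eq_zero {V : Fin 3 → (Fin 3 → ℝ) → ℝ} (hV : ∀ k, ContDiffAt ℝ 2 (V k) x) :
    ∑ i, pdR i (curl V i) x = 0 := by
  have expand (i : Fin 3) : pdR i (curl V i) x
      = pdR i (pdR (i + 1) (V (i + 2))) x - pdR i (pdR (i + 2) (V (i + 1))) x :=
    pdR_sub (hV _).differentiableAt_pdR (hV _).differentiableAt_pdR
  simp only [Fin.sum_univ_three, expand, Fin.reduceAdd]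
  rw [(hV 0).pdR_comm (i := 2), (hV 1).pdR_comm (i := 0), (hV 2).pdR_comm (i := 1)]
  ring

theorem sum_pdR_mul_pdR_sub (hu : ContDiffAt ℝ 2 u x) (hv : ContDiffAt ℝ 2 v x) :
    ∑ i, pdR i (fun y => u y * pdR i v y - v y * pdR i u y) x
      = u x * lapl v x - v x * lapl u x := by
  have expand (i : Fin 3) : pdR i (fun y => u y * pdR i v y - v y * pdR i u y) x
      = u x * pdR i (pdR i v) x - v x * pdR i (pdR i u) x := by
    rw [pdR_sub (u := fun y => u y * pdR i v y) (v := fun y => v y * pdR i u y)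
        (hu.differentiableAt (by simp) |>.mul hv.differentiableAt_pdR)
        (hv.differentiableAt (by simp) |>.mul hu.differentiableAt_pdR),
      pdR_mul (hu.differentiableAt (by simp)) hv.differentiableAt_pdR,
      pdR_mul (hv.differentiableAt (by simp)) hu.differentiableAt_pdR]
    ring
  simp only [Fin.sum_univ_three, expand, lapl]
  ring

end VectorCalculus

def reCLM : Quaternion ℝ →L[ℝ] ℝ :=
  LinearMap.toContinuousLinearMap (QuaternionAlgebra.reₗ _ _ _)

def imCLM (k : Fin 3) : Quaternion ℝ →L[ℝ] ℝ :=
  LinearMap.toContinuousLinearMap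
    (![QuaternionAlgebra.imIₗ _ _ _, QuaternionAlgebra.imJₗ _ _ _, QuaternionAlgebra.imKₗ _ _ _] k)

theorem imCLM_apply (k : Fin 3) (q : Quaternion ℝ) : imCLM k q = ![q.imI, q.imJ, q.imK] k := by
  fin_cases k <;> rfl

section Quaternionic

variable {w : (Fin 3 → ℝ) → Quaternion ℝ} {x : Fin 3 → ℝ} {i : Fin 3}

theorem differentiableAt_re (hw : DifferentiableAt ℝ w x) :
    DifferentiableAt ℝ (fun y => (w y).re) x :=
  reCLM.differentiableAt.comp x hw

theorem pdR_re (hw : DifferentiableAt ℝ w x) : pdR i (fun y => (w y).re) x = (pd i w x).re :=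
  pdR_clm_comp reCLM hw

theorem sub_eq_curl_of_vekua {f g : (Fin 3 → ℝ) → ℝ} (hf : DifferentiableAt ℝ f x)
    (hg : DifferentiableAt ℝ g x) (hw : DifferentiableAt ℝ w x) (hf0 : f x ≠ 0) (hg0 : g x ≠ 0)
    (hV : Dq w x = (f x)⁻¹ • (gradq f x * star (w x)) + (g x)⁻¹ • (gradq g x * w x))
    (i : Fin 3) :
    (w x).re / g x * pdR i f x - f x * pdR i (fun y => (w y).re / g y) x
      = curl (fun k y => f y / g y * imCLM k (w y)) i x := by
  have hfg : DifferentiableAt ℝ (fun y => f y / g y) x := by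
    fun_prop (disch := exact hg0)
  have hcurl (j k : Fin 3) : pdR j (fun y => f y / g y * imCLM k (w y)) x
      = (pdR j f x * g x - f x * pdR j g x) / g x ^ 2 * imCLM k (w x)
        + f x / g x * imCLM k (pd j w x) := by
    rw [pdR_mul (v := fun y => imCLM k (w y)) hfg ((imCLM k).differentiableAt.comp x hw),
      pdR_clm_comp _ hw, pdR_div hf hg hg0]
    rfl
  have hVi := congrArg (imCLM i) hV
  simp only [curl, hcurl, pdR_div (differentiableAt_re hw) hg hg0, pdR_re hw]
  fin_cases i <;>
    simp only [imCLM_apply, Dq, Quaternion.imI_add, Quaternion.imJ_add, Quaternion.imK_add,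
      Quaternion.imI_mul, Quaternion.imJ_mul, Quaternion.imK_mul, Quaternion.imI_smul,
      Quaternion.imJ_smul, Quaternion.imK_smul, Quaternion.re_star, Quaternion.imI_star,
      Quaternion.imJ_star, Quaternion.imK_star] at hVi ⊢ <;>
    simp only [qi, qj, qk, gradq, Fin.isValue, Fin.reduceAdd, Fin.reduceFinMk, Matrix.cons_val,
      Matrix.cons_val_zero, Matrix.cons_val_one, smul_eq_mul, zero_mul, one_mul, zero_add,
      add_zero, sub_zero, zero_sub, sub_self, mul_neg, neg_zero, sub_neg_eq_add] at hVi ⊢ <;>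
    field_simp at hVi ⊢ <;>
    linear_combination -hVi

end Quaternionic

/-- if `w` solves the Vekua equation `Dw = (∇f/f)·star w + (∇g/g)·w`,
then `Sc w/g` solves the Schrödinger equation `Δ(Sc w/g) − (Δf/f)(Sc w/g) = 0`. -/
theorem vekua_implies_schrodinger (Ω : Set (Fin 3 → ℝ)) (hΩ : IsOpen Ω)
    (f g : (Fin 3 → ℝ) → ℝ) (w : (Fin 3 → ℝ) → Quaternion ℝ)
    (hf : ContDiffOn ℝ 2 f Ω) (hg : ContDiffOn ℝ 2 g Ω)
    (hfpos : ∀ x ∈ Ω, 0 < f x) (hgpos : ∀ x ∈ Ω, 0 < g x)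
    (hw : ContDiffOn ℝ 2 w Ω)
    (hVekua : ∀ x ∈ Ω, Dq w x =
        (f x)⁻¹ • (gradq f x * star (w x)) + (g x)⁻¹ • (gradq g x * w x)) :
    ∀ x ∈ Ω,
      lapl (fun y => (w y).re / g y) x
        - (lapl f x / f x) * ((w x).re / g x) = 0 := by
  intro x hx
  have hg0 : ∀ y ∈ Ω, g y ≠ 0 := fun y hy => (hgpos y hy).ne'
  have hu : ContDiffOn ℝ 2 (fun y => (w y).re / g y) Ω :=
    (reCLM.contDiff.comp_contDiffOn hw).div hg hg0
  have hV (k : Fin 3) : ContDiffOn ℝ 2 (fun y => f y / g y * imCLM k (w y)) Ω :=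
    (hf.div hg hg0).mul ((imCLM k).contDiff.comp_contDiffOn hw)
  have hflux (i : Fin 3) :
      pdR i (fun y => (w y).re / g y * pdR i f y - f y * pdR i (fun z => (w z).re / g z) y) x
        = pdR i (curl (fun k y => f y / g y * imCLM k (w y)) i) x :=
    pdR_congr_of_eqOn hΩ hx fun y hy =>
      sub_eq_curl_of_vekua ((hf.differentiableOn two_ne_zero).differentiableAt (hΩ.mem_nhds hy))
        ((hg.differentiableOn two_ne_zero).differentiableAt (hΩ.mem_nhds hy))
        ((hw.differentiableOn two_ne_zero).differentiableAt (hΩ.mem_nhds hy))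
        (hfpos y hy).ne' (hg0 y hy) (hVekua y hy) i
  have key : (w x).re / g x * lapl f x - f x * lapl (fun y => (w y).re / g y) x = 0 := by
    rw [← sum_pdR_mul_pdR_sub (hu.contDiffAt (hΩ.mem_nhds hx)) (hf.contDiffAt (hΩ.mem_nhds hx)),
      Finset.sum_congr rfl fun i _ => hflux i]
    exact sum_pdR_curl_eq_zero fun k => (hV k).contDiffAt (hΩ.mem_nhds hx)
  field_simp [(hfpos x hx).ne']
  linear_combination -key

end
end

section
/- Let Ω ⊆ ℝ³ be open, let α, β : Ω → ℍ be differentiable, and let h₀ : Ω → ℝ be twice differentiable. Define v := ∇h₀ − h₀·α − h₀·β (the result of applying the operator D − αC − β to the scalar function h₀). Then for every x ∈ Ω: Sc( Dv(x) − star(v(x))·α(x) − star(β(x))·v(x) ) = −Δh₀(x) + ( |α(x)|² + |β(x)|² + div(Vec α)(x) + div(Vec β)(x) + 2·Sc(star(α(x))·β(x)) )·h₀(x). In other words, the Schrödinger operator −Δ + |α|² + |β|² + div(Vec α) + div(Vec β) + 2·Sc(star(α)·β) on scalar functions is the scalar part of the composition (D − M^α C − conj(β))(D − αC − β). -/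
/-!
Write `v = ∇h₀ - h₀ α - h₀ β`. The scalar part of `D w` is `-div (Vec w)`, and `D` obeys the
Leibniz rule `D (h w) = h D w + (∇h) w`, so
`Sc (D v) = -Δh₀ + h₀ (div (Vec α) + div (Vec β)) - Sc (∇h₀ α) - Sc (∇h₀ β)`.
Since `∇h₀` is a pure quaternion, `star v = -∇h₀ - h₀ star α - h₀ star β`, and the cross terms
`Sc (∇h₀ α)`, `Sc (∇h₀ β)` coming from `Sc (star v α) + Sc (star β v)` cancel those above,
leaving `h₀ (|α|² + |β|² + 2 Sc (star α β))`.
-/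

open MeasureTheory

noncomputable section

open Quaternion

section Calculus

variable {x : Fin 3 → ℝ}

lemma pdR_comp_linearMap {w : (Fin 3 → ℝ) → Quaternion ℝ} (L : Quaternion ℝ →ₗ[ℝ] ℝ)
    (hw : DifferentiableAt ℝ w x) (i : Fin 3) :
    pdR i (fun y => L (w y)) x = L (pd i w x) :=
  congrArg (· (Pi.single i 1)) (L.toContinuousLinearMap.hasFDerivAt.comp x hw.hasFDerivAt).fderiv

lemma pd_sub {f g : (Fin 3 → ℝ) → Quaternion ℝ} (hf : DifferentiableAt ℝ f x)
    (hg : DifferentiableAt ℝ g x) (i : Fin 3) :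
    pd i (fun y => f y - g y) x = pd i f x - pd i g x := by
  simp only [pd, fderiv_fun_sub hf hg, sub_apply]

lemma pd_smul {c : (Fin 3 → ℝ) → ℝ} {w : (Fin 3 → ℝ) → Quaternion ℝ}
    (hc : DifferentiableAt ℝ c x) (hw : DifferentiableAt ℝ w x) (i : Fin 3) :
    pd i (fun y => c y • w y) x = c x • pd i w x + pdR i c x • w x := by
  simp only [pd, pdR, fderiv_fun_smul hc hw, add_apply,
    smul_apply, ContinuousLinearMap.smulRight_apply]

lemma Dq_sub {f g : (Fin 3 → ℝ) → Quaternion ℝ} (hf : DifferentiableAt ℝ f x)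
    (hg : DifferentiableAt ℝ g x) :
    Dq (fun y => f y - g y) x = Dq f x - Dq g x := by
  simp only [Dq, pd_sub hf hg, mul_sub]
  abel

lemma gradq_eq (u : (Fin 3 → ℝ) → ℝ) (y : Fin 3 → ℝ) :
    gradq u y = pdR 0 u y • qi + pdR 1 u y • qj + pdR 2 u y • qk := by
  ext <;> simp [gradq] <;> simp [qi, qj, qk]

lemma Dq_smul {c : (Fin 3 → ℝ) → ℝ} {w : (Fin 3 → ℝ) → Quaternion ℝ}
    (hc : DifferentiableAt ℝ c x) (hw : DifferentiableAt ℝ w x) :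
    Dq (fun y => c y • w y) x = c x • Dq w x + gradq c x * w x := by
  simp only [Dq, gradq_eq, pd_smul hc hw, mul_add, add_mul, mul_smul_comm, smul_mul_assoc,
    smul_add]
  abel

lemma re_qi_mul (q : Quaternion ℝ) : (qi * q).re = -q.imI := by
  rw [re_mul]; simp [qi]

lemma re_qj_mul (q : Quaternion ℝ) : (qj * q).re = -q.imJ := by
  rw [re_mul]; simp [qj]

lemma re_qk_mul (q : Quaternion ℝ) : (qk * q).re = -q.imK := by
  rw [re_mul]; simp [qk]

lemma re_Dq {w : (Fin 3 → ℝ) → Quaternion ℝ} (hw : DifferentiableAt ℝ w x) :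
    (Dq w x).re = -divVec w x := by
  have hI (i : Fin 3) : pdR i (fun y => (w y).imI) x = (pd i w x).imI :=
    pdR_comp_linearMap (QuaternionAlgebra.imIₗ _ _ _) hw i
  have hJ (i : Fin 3) : pdR i (fun y => (w y).imJ) x = (pd i w x).imJ :=
    pdR_comp_linearMap (QuaternionAlgebra.imJₗ _ _ _) hw i
  have hK (i : Fin 3) : pdR i (fun y => (w y).imK) x = (pd i w x).imK :=
    pdR_comp_linearMap (QuaternionAlgebra.imKₗ _ _ _) hw i
  simp only [Dq, divVec, hI, hJ, hK, re_add, re_qi_mul, re_qj_mul, re_qk_mul]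
  ring

lemma differentiableAt_gradq {u : (Fin 3 → ℝ) → ℝ} (hu : DifferentiableAt ℝ (fderiv ℝ u) x) :
    DifferentiableAt ℝ (gradq u) x := by
  have hpd (i : Fin 3) : DifferentiableAt ℝ (pdR i u) x :=
    hu.clm_apply (differentiableAt_const _)
  rw [show gradq u = fun y => pdR 0 u y • qi + pdR 1 u y • qj + pdR 2 u y • qk from
    funext (gradq_eq u)]
  fun_prop

end Calculus

lemma re_star_mul_add_re_star_mul (g a b : Quaternion ℝ) (hg : g.re = 0) (h : ℝ) :
    (star (g - h • a - h • b) * a).re + (star b * (g - h • a - h • b)).re =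
      -(g * a).re - (g * b).re - (‖a‖ ^ 2 + ‖b‖ ^ 2 + 2 * (star a * b).re) * h := by
  simp only [sq, ← normSq_eq_norm_mul_self, normSq_def', re_sub, re_mul, re_star,
    re_smul, imI_sub, imI_smul, imI_star, imJ_sub, imJ_smul, imJ_star, imK_sub, imK_smul,
    imK_star, hg, smul_eq_mul]
  ring

theorem factorization_second_general (Ω : Set (Fin 3 → ℝ))
    (α β : (Fin 3 → ℝ) → Quaternion ℝ)
    (hα : ∀ x ∈ Ω, DifferentiableAt ℝ α x) (hβ : ∀ x ∈ Ω, DifferentiableAt ℝ β x)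
    (h₀ : (Fin 3 → ℝ) → ℝ)
    (hh₀ : ∀ x ∈ Ω, DifferentiableAt ℝ h₀ x)
    (hh₀' : ∀ x ∈ Ω, DifferentiableAt ℝ (fderiv ℝ h₀) x) :
    ∀ x ∈ Ω,
      (Dq (fun y => gradq h₀ y - h₀ y • α y - h₀ y • β y) x
          - star (gradq h₀ x - h₀ x • α x - h₀ x • β x) * α x
          - star (β x) * (gradq h₀ x - h₀ x • α x - h₀ x • β x)).re =
        -lapl h₀ x +
          (‖α x‖ ^ 2 + ‖β x‖ ^ 2 + divVec α x + divVec β x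
            + 2 * (star (α x) * β x).re) * h₀ x := by
  intro x hx
  have hg := differentiableAt_gradq (hh₀' x hx)
  have hhα : DifferentiableAt ℝ (fun y => h₀ y • α y) x := (hh₀ x hx).smul (hα x hx)
  have hhβ : DifferentiableAt ℝ (fun y => h₀ y • β y) x := (hh₀ x hx).smul (hβ x hx)
  have hDv : Dq (fun y => gradq h₀ y - h₀ y • α y - h₀ y • β y) x =
      Dq (gradq h₀) x - (h₀ x • Dq α x + gradq h₀ x * α x)
        - (h₀ x • Dq β x + gradq h₀ x * β x) := by
    rw [Dq_sub (hg.fun_sub hhα) hhβ, Dq_sub hg hhα, Dq_smul (hh₀ x hx) (hα x hx),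
      Dq_smul (hh₀ x hx) (hβ x hx)]
  have hlapl : (Dq (gradq h₀) x).re = -lapl h₀ x := re_Dq hg
  rw [re_sub, re_sub, hDv]
  simp only [re_sub, re_add, re_smul, smul_eq_mul, hlapl, re_Dq (hα x hx), re_Dq (hβ x hx)]
  linarith [re_star_mul_add_re_star_mul (gradq h₀ x) (α x) (β x) rfl (h₀ x)]

/-- the Schrödinger operator
`−Δ + |α|² + |β|² + div(Vec α) + div(Vec β) + 2 Sc(star(α)β)` on scalar functions is the
scalar part of the composition `(D − MᵅC − conj β)(D − αC − β)`. -/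
theorem factorization_second (Ω : Set (Fin 3 → ℝ)) (hΩ : IsOpen Ω)
    (α β : (Fin 3 → ℝ) → Quaternion ℝ)
    (hα : ∀ x ∈ Ω, DifferentiableAt ℝ α x) (hβ : ∀ x ∈ Ω, DifferentiableAt ℝ β x)
    (h₀ : (Fin 3 → ℝ) → ℝ)
    (hh₀ : ∀ x ∈ Ω, DifferentiableAt ℝ h₀ x)
    (hh₀' : ∀ x ∈ Ω, DifferentiableAt ℝ (fderiv ℝ h₀) x) :
    ∀ x ∈ Ω,
      (Dq (fun y => gradq h₀ y - h₀ y • α y - h₀ y • β y) x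
          - star (gradq h₀ x - h₀ x • α x - h₀ x • β x) * α x
          - star (β x) * (gradq h₀ x - h₀ x • α x - h₀ x • β x)).re =
        -lapl h₀ x +
          (‖α x‖ ^ 2 + ‖β x‖ ^ 2 + divVec α x + divVec β x
            + 2 * (star (α x) * β x).re) * h₀ x :=
  factorization_second_general Ω α β hα hβ h₀ hh₀ hh₀'

end
end
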